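/- arXiv:1211.1501 — 3 statements merged into one kernel-verified Lean document; each statement's English description precedes it below -/
import Mathlib

section
/- Let T ⊆ A and S ⊆ B be operator spaces. If the triple (A, S, A ⊗ B) has the slice map property, i.e. F(A, S, A ⊗ B) = A ⊗ S, then F(T, S, A ⊗ S) = F(T, S, A ⊗ B). -/
/-- An abstract model of the spatial (minimal) tensor product `X = A ⊗ B` of operator
spaces, recording the (jointly continuous) elementary tensor map, the left slice maps
`φ ⊗ id : A ⊗ B → B` (`φ ∈ A*`) and right slice maps `id ⊗ ψ : A ⊗ B → A` (`ψ ∈ B*`),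
together with the fact that `X` is the closed linear span of the elementary tensors. -/
structure SpatialTensor (A B X : Type*) [NormedAddCommGroup A] [NormedSpace ℂ A]
    [NormedAddCommGroup B] [NormedSpace ℂ B] [NormedAddCommGroup X] [NormedSpace ℂ X] where
  tmul : A →L[ℂ] B →L[ℂ] X
  leftSlice : (A →L[ℂ] ℂ) → (X →L[ℂ] B)
  rightSlice : (B →L[ℂ] ℂ) → (X →L[ℂ] A)
  leftSlice_tmul : ∀ φ a b, leftSlice φ (tmul a b) = φ a • b
  rightSlice_tmul : ∀ ψ a b, rightSlice ψ (tmul a b) = ψ b • a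
  denseSpan :
    closure ((Submodule.span ℂ {x | ∃ a b, x = tmul a b} : Submodule ℂ X) : Set X) = Set.univ

variable {A B X : Type*} [NormedAddCommGroup A] [NormedSpace ℂ A]
    [NormedAddCommGroup B] [NormedSpace ℂ B] [NormedAddCommGroup X] [NormedSpace ℂ X]

/-- The spatial tensor product `T ⊗ S` of subspaces `T ⊆ A`, `S ⊆ B`, realized inside
`X = A ⊗ B` as the closed linear span of the elementary tensors `t ⊗ s`, `t ∈ T`, `s ∈ S`. -/
def SpatialTensor.subTensor (P : SpatialTensor A B X) (T : Set A) (S : Set B) : Set X :=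
  closure ((Submodule.span ℂ {x | ∃ t ∈ T, ∃ s ∈ S, x = P.tmul t s} : Submodule ℂ X) : Set X)

/-- The Fubini product `F(T, S, A ⊗ B)`: all `x ∈ A ⊗ B` whose left slices `(φ ⊗ id)(x)`
lie in `S` for all `φ ∈ A*` and whose right slices `(id ⊗ ψ)(x)` lie in `T` for all
`ψ ∈ B*` (by Hahn–Banach, functionals on a subspace are exactly restrictions from the
ambient space). -/
def SpatialTensor.fubini (P : SpatialTensor A B X) (T : Set A) (S : Set B) : Set X :=
  {x | (∀ φ : A →L[ℂ] ℂ, P.leftSlice φ x ∈ S) ∧ (∀ ψ : B →L[ℂ] ℂ, P.rightSlice ψ x ∈ T)}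

/-- If the triple `(A, S, A ⊗ B)` has the slice map property, i.e.
`F(A, S, A ⊗ B) = A ⊗ S`, then `F(T, S, A ⊗ S) = F(T, S, A ⊗ B)`.  Here the Fubini
product relative to the subspace `A ⊗ S ⊆ A ⊗ B` is `(A ⊗ S) ∩ F(T, S, A ⊗ B)`, using
that (Hahn–Banach) every functional on `S` extends to `B`. -/
theorem fubini_in_subTensor_eq_fubini
    {A B X : Type*} [NormedAddCommGroup A] [NormedSpace ℂ A]
    [NormedAddCommGroup B] [NormedSpace ℂ B] [NormedAddCommGroup X] [NormedSpace ℂ X]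
    (P : SpatialTensor A B X) (T : Submodule ℂ A) (S : Submodule ℂ B)
    (hT : IsClosed (T : Set A)) (hS : IsClosed (S : Set B))
    (hSMP : P.fubini Set.univ ↑S = P.subTensor Set.univ ↑S) :
    P.subTensor Set.univ ↑S ∩ P.fubini ↑T ↑S = P.fubini ↑T ↑S := by
  apply Set.inter_eq_right.mpr
  intro x hx
  rw [← hSMP]
  exact ⟨hx.1, fun ψ => trivial⟩
end

section
/- Let T ⊆ A and S ⊆ B be operator spaces. If both (A, S, A ⊗ B) and (T, S, A ⊗ S) have the slice map property, then (T, S, T ⊗ B) has the slice map property, i.e. F(T, S, T ⊗ B) = T ⊗ S. -/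
variable {A B X : Type*} [NormedAddCommGroup A] [NormedSpace ℂ A]
    [NormedAddCommGroup B] [NormedSpace ℂ B] [NormedAddCommGroup X] [NormedSpace ℂ X]

/-- If `(A, S, A ⊗ B)` and `(T, S, A ⊗ S)` have the slice map property,
then so does `(T, S, T ⊗ B)`: `F(T, S, T ⊗ B) = T ⊗ S`.  Fubini products relative to the
subspaces `A ⊗ S` and `T ⊗ B` of `A ⊗ B` are formed by intersecting with
`F(T, S, A ⊗ B)`, using Hahn–Banach to extend functionals from subspaces. -/
theorem slice_map_property_trans
    {A B X : Type*} [NormedAddCommGroup A] [NormedSpace ℂ A]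
    [NormedAddCommGroup B] [NormedSpace ℂ B] [NormedAddCommGroup X] [NormedSpace ℂ X]
    (P : SpatialTensor A B X) (T : Submodule ℂ A) (S : Submodule ℂ B)
    (hT : IsClosed (T : Set A)) (hS : IsClosed (S : Set B))
    (hASMP : P.fubini Set.univ ↑S = P.subTensor Set.univ ↑S)
    (hTSMP : P.subTensor Set.univ ↑S ∩ P.fubini ↑T ↑S = P.subTensor ↑T ↑S) :
    P.subTensor ↑T Set.univ ∩ P.fubini ↑T ↑S = P.subTensor ↑T ↑S := by
  ext x
  constructor
  · rintro ⟨-, hf⟩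
    have hx : x ∈ P.fubini Set.univ ↑S := ⟨hf.1, fun ψ => Set.mem_univ _⟩
    rw [hASMP] at hx
    rw [← hTSMP]
    exact ⟨hx, hf⟩
  · intro hx
    refine ⟨?_, ((Set.ext_iff.mp hTSMP x).mpr hx).2⟩
    refine closure_mono ?_ hx
    refine SetLike.coe_subset_coe.mpr (Submodule.span_mono ?_)
    rintro y ⟨t, ht, s, hs, rfl⟩
    exact ⟨t, ht, s, Set.mem_univ s, rfl⟩
end

section
/- Let T ⊆ A be operator spaces and suppose A has the slice map property for a C*-algebra B (i.e. F(A, S, A ⊗ B) = A ⊗ S for every operator space S ⊆ B). Then for every operator space S ⊆ B: F(T, S, A ⊗ S) = (A ⊗ S) ∩ F(T, B, A ⊗ B). -/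
variable {A B X : Type*} [NormedAddCommGroup A] [NormedSpace ℂ A]
    [NormedAddCommGroup B] [NormedSpace ℂ B] [NormedAddCommGroup X] [NormedSpace ℂ X]

/-- Suppose `A` has the slice map property for `B`, i.e.
`F(A, S', A ⊗ B) = A ⊗ S'` for every (closed) operator space `S' ⊆ B`.  Then for every
operator space `S ⊆ B` one has `F(T, S, A ⊗ S) = (A ⊗ S) ∩ F(T, B, A ⊗ B)`, where the
Fubini product relative to `A ⊗ S` is `(A ⊗ S) ∩ F(T, S, A ⊗ B)` (every functional on
`S` extends to `B` by Hahn–Banach). -/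
theorem fubini_in_subTensor_eq_inter_fubini_full
    {A B X : Type*} [NormedAddCommGroup A] [NormedSpace ℂ A]
    [NormedAddCommGroup B] [NormedSpace ℂ B] [NormedAddCommGroup X] [NormedSpace ℂ X]
    (P : SpatialTensor A B X) (T : Submodule ℂ A) (hT : IsClosed (T : Set A))
    (hSMP : ∀ S' : Submodule ℂ B, IsClosed (S' : Set B) →
      P.fubini Set.univ ↑S' = P.subTensor Set.univ ↑S') :
    ∀ S : Submodule ℂ B, IsClosed (S : Set B) →
      P.subTensor Set.univ ↑S ∩ P.fubini ↑T ↑S =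
        P.subTensor Set.univ ↑S ∩ P.fubini ↑T Set.univ := by
  intro S hS
  ext x
  constructor
  · rintro ⟨hsub, hL, hR⟩
    exact ⟨hsub, fun φ => Set.mem_univ _, hR⟩
  · rintro ⟨hsub, hL, hR⟩
    have hx : x ∈ P.fubini Set.univ ↑S := (hSMP S hS) ▸ hsub
    exact ⟨hsub, hx.1, hR⟩
end
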